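/- arXiv:1611.08723 — 2 statements merged into one kernel-verified Lean document; each statement's English description precedes it below -/
import Mathlib

section
/- If β^{(2n)} admits a representing measure μ, then the support of μ is contained in the algebraic variety V(M(n)) := ⋂ { Z(p) : p polynomial of degree ≤ n with p̂ ∈ ker M(n) }, and consequently rank M(n) ≤ card(supp μ) ≤ card V(M(n)). -/
open MeasureTheory MvPolynomial

/-- Index set for moments/monomials of degree at most `n`. -/
abbrev Idx (n : ℕ) := {p : Fin (n+1) × Fin (n+1) // (p.1 : ℕ) + (p.2 : ℕ) ≤ n}

/-- The moment matrix `M(n)` associated with the sequence `β`. -/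
noncomputable def momentMatrix (n : ℕ) (β : ℕ → ℕ → ℝ) : Matrix (Idx n) (Idx n) ℝ :=
  fun p q => β ((p.1.1 : ℕ) + (q.1.1 : ℕ)) ((p.1.2 : ℕ) + (q.1.2 : ℕ))

/-- Coefficient vector of a bivariate polynomial, indexed by monomials of degree ≤ n. -/
noncomputable def coeffVec (n : ℕ) (p : MvPolynomial (Fin 2) ℝ) : Idx n → ℝ :=
  fun q => p.coeff (Finsupp.single 0 (q.1.1 : ℕ) + Finsupp.single 1 (q.1.2 : ℕ))

/-- The algebraic variety of the moment matrix `M(n)`. -/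
def variety (n : ℕ) (β : ℕ → ℕ → ℝ) : Set (ℝ × ℝ) :=
  {z | ∀ p : MvPolynomial (Fin 2) ℝ, p.totalDegree ≤ n →
     (momentMatrix n β).mulVec (coeffVec n p) = 0 → eval ![z.1, z.2] p = 0}

/-- `μ` is a representing measure for the degree-`2n` moment sequence `β`. -/
def Represents (n : ℕ) (β : ℕ → ℕ → ℝ) (μ : Measure (ℝ × ℝ)) : Prop :=
  ∀ i j : ℕ, i + j ≤ 2 * n →
    Integrable (fun z : ℝ × ℝ => z.1 ^ i * z.2 ^ j) μ ∧
    β i j = ∫ z : ℝ × ℝ, z.1 ^ i * z.2 ^ j ∂μ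

/-- The Riesz functional associated with `β`. -/
noncomputable def riesz (β : ℕ → ℕ → ℝ) (p : MvPolynomial (Fin 2) ℝ) : ℝ :=
  ∑ d ∈ p.support, p.coeff d * β (d 0) (d 1)

/-- The closed support of a measure on `ℝ²`. -/
def msupport (μ : Measure (ℝ × ℝ)) : Set (ℝ × ℝ) :=
  {z | ∀ U : Set (ℝ × ℝ), IsOpen U → z ∈ U → μ U ≠ 0}

section Aux
open Matrix

variable {n : ℕ} {β : ℕ → ℕ → ℝ} {μ : Measure (ℝ × ℝ)} {c : Idx n → ℝ}

/-- The polynomial function associated to a coefficient vector. -/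
noncomputable def fV (n : ℕ) (c : Idx n → ℝ) (z : ℝ × ℝ) : ℝ :=
  ∑ q : Idx n, c q * (z.1 ^ (q.1.1 : ℕ) * z.2 ^ (q.1.2 : ℕ))

lemma fV_continuous (n : ℕ) (c : Idx n → ℝ) : Continuous (fV n c) := by
  unfold fV
  exact continuous_finset_sum _ fun q _ => by fun_prop

/-- the monomial exponent map -/
noncomputable def eIdx (n : ℕ) (q : Idx n) : Fin 2 →₀ ℕ :=
  Finsupp.single 0 (q.1.1 : ℕ) + Finsupp.single 1 (q.1.2 : ℕ)

lemma eIdx_apply0 (n : ℕ) (q : Idx n) : eIdx n q 0 = (q.1.1 : ℕ) := by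
  simp [eIdx, Finsupp.single_apply]

lemma eIdx_apply1 (n : ℕ) (q : Idx n) : eIdx n q 1 = (q.1.2 : ℕ) := by
  simp [eIdx, Finsupp.single_apply]

lemma eIdx_injective (n : ℕ) : Function.Injective (eIdx n) := by
  intro q r h
  have h0 : (q.1.1 : ℕ) = (r.1.1 : ℕ) := by
    rw [← eIdx_apply0 n q, ← eIdx_apply0 n r, h]
  have h1 : (q.1.2 : ℕ) = (r.1.2 : ℕ) := by
    rw [← eIdx_apply1 n q, ← eIdx_apply1 n r, h]
  exact Subtype.ext (Prod.ext (Fin.val_injective h0) (Fin.val_injective h1))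

lemma support_subset_image (p : MvPolynomial (Fin 2) ℝ) (hp : p.totalDegree ≤ n) :
    p.support ⊆ Finset.univ.image (eIdx n) := by
  intro d hd
  have hdeg : d 0 + d 1 ≤ n := by
    have := MvPolynomial.le_totalDegree hd
    have hsum : (d.sum fun _ k => k) = d 0 + d 1 := by
      rw [Finsupp.sum_fintype _ _ (fun _ => rfl), Fin.sum_univ_two]
    omega
  have h0 : d 0 < n + 1 := by omega
  have h1 : d 1 < n + 1 := by omega
  refine Finset.mem_image.2 ⟨⟨(⟨d 0, h0⟩, ⟨d 1, h1⟩), by simpa using hdeg⟩, Finset.mem_univ _, ?_⟩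
  ext i
  fin_cases i <;> simp [eIdx, Finsupp.single_apply]

lemma eval_eq_fV (p : MvPolynomial (Fin 2) ℝ) (hp : p.totalDegree ≤ n) (z : ℝ × ℝ) :
    eval ![z.1, z.2] p = fV n (coeffVec n p) z := by
  rw [MvPolynomial.eval_eq']
  rw [Finset.sum_subset (support_subset_image p hp)
    (fun d _ hd => by rw [MvPolynomial.notMem_support_iff.1 hd, zero_mul])]
  rw [Finset.sum_image (fun q _ r _ h => eIdx_injective n h)]
  unfold fV coeffVec
  refine Finset.sum_congr rfl fun q _ => ?_
  rw [Fin.prod_univ_two, eIdx_apply0, eIdx_apply1]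
  simp only [Matrix.cons_val_zero, Matrix.cons_val_one, Matrix.head_cons]
  rfl

lemma mono_mul_mono_integrable (hμ : Represents n β μ) (q r : Idx n) :
    Integrable (fun z : ℝ × ℝ =>
      (z.1 ^ (q.1.1 : ℕ) * z.2 ^ (q.1.2 : ℕ)) * (z.1 ^ (r.1.1 : ℕ) * z.2 ^ (r.1.2 : ℕ))) μ := by
  have hle : (q.1.1 : ℕ) + (r.1.1 : ℕ) + ((q.1.2 : ℕ) + (r.1.2 : ℕ)) ≤ 2 * n := by
    have := q.2; have := r.2; omega
  have := (hμ _ _ hle).1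
  refine this.congr ?_
  filter_upwards with z
  ring

lemma beta_eq_integral (hμ : Represents n β μ) (q r : Idx n) :
    β ((q.1.1 : ℕ) + (r.1.1 : ℕ)) ((q.1.2 : ℕ) + (r.1.2 : ℕ))
      = ∫ z : ℝ × ℝ, (z.1 ^ (q.1.1 : ℕ) * z.2 ^ (q.1.2 : ℕ))
          * (z.1 ^ (r.1.1 : ℕ) * z.2 ^ (r.1.2 : ℕ)) ∂μ := by
  have hle : (q.1.1 : ℕ) + (r.1.1 : ℕ) + ((q.1.2 : ℕ) + (r.1.2 : ℕ)) ≤ 2 * n := by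
    have := q.2; have := r.2; omega
  rw [(hμ _ _ hle).2]
  refine integral_congr_ae ?_
  filter_upwards with z
  ring

lemma mono_mul_fV_integrable (hμ : Represents n β μ) (q : Idx n) (c : Idx n → ℝ) :
    Integrable (fun z : ℝ × ℝ =>
      (z.1 ^ (q.1.1 : ℕ) * z.2 ^ (q.1.2 : ℕ)) * fV n c z) μ := by
  have : (fun z : ℝ × ℝ => (z.1 ^ (q.1.1 : ℕ) * z.2 ^ (q.1.2 : ℕ)) * fV n c z)
      = fun z => ∑ r : Idx n, c r * ((z.1 ^ (q.1.1 : ℕ) * z.2 ^ (q.1.2 : ℕ))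
          * (z.1 ^ (r.1.1 : ℕ) * z.2 ^ (r.1.2 : ℕ))) := by
    funext z
    rw [fV, Finset.mul_sum]
    exact Finset.sum_congr rfl fun r _ => by ring
  rw [this]
  exact integrable_finset_sum _ fun r _ => ((mono_mul_mono_integrable hμ q r).const_mul _)

lemma mulVec_eq_integral (hμ : Represents n β μ) (c : Idx n → ℝ) (q : Idx n) :
    (momentMatrix n β).mulVec c q
      = ∫ z : ℝ × ℝ, (z.1 ^ (q.1.1 : ℕ) * z.2 ^ (q.1.2 : ℕ)) * fV n c z ∂μ := by
  have : (fun z : ℝ × ℝ => (z.1 ^ (q.1.1 : ℕ) * z.2 ^ (q.1.2 : ℕ)) * fV n c z)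
      = fun z => ∑ r : Idx n, c r * ((z.1 ^ (q.1.1 : ℕ) * z.2 ^ (q.1.2 : ℕ))
          * (z.1 ^ (r.1.1 : ℕ) * z.2 ^ (r.1.2 : ℕ))) := by
    funext z
    rw [fV, Finset.mul_sum]
    exact Finset.sum_congr rfl fun r _ => by ring
  rw [this, integral_finset_sum _
    (fun r _ => (mono_mul_mono_integrable hμ q r).const_mul _)]
  rw [Matrix.mulVec, dotProduct]
  refine Finset.sum_congr rfl fun r _ => ?_
  rw [integral_const_mul, momentMatrix, beta_eq_integral hμ q r, mul_comm]

lemma fV_sq_integrable (hμ : Represents n β μ) (c : Idx n → ℝ) :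
    Integrable (fun z : ℝ × ℝ => fV n c z * fV n c z) μ := by
  have : (fun z : ℝ × ℝ => fV n c z * fV n c z)
      = fun z => ∑ q : Idx n, c q * ((z.1 ^ (q.1.1 : ℕ) * z.2 ^ (q.1.2 : ℕ)) * fV n c z) := by
    funext z
    conv_lhs => rw [fV, Finset.sum_mul]
    exact Finset.sum_congr rfl fun q _ => by rw [fV]; ring
  rw [this]
  exact integrable_finset_sum _ fun q _ => ((mono_mul_fV_integrable hμ q c).const_mul _)

lemma dot_eq_integral_sq (hμ : Represents n β μ) (c : Idx n → ℝ) :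
    c ⬝ᵥ (momentMatrix n β).mulVec c = ∫ z : ℝ × ℝ, fV n c z * fV n c z ∂μ := by
  have : (fun z : ℝ × ℝ => fV n c z * fV n c z)
      = fun z => ∑ q : Idx n, c q * ((z.1 ^ (q.1.1 : ℕ) * z.2 ^ (q.1.2 : ℕ)) * fV n c z) := by
    funext z
    conv_lhs => rw [fV, Finset.sum_mul]
    exact Finset.sum_congr rfl fun q _ => by rw [fV]; ring
  rw [this, integral_finset_sum _
    (fun q _ => (mono_mul_fV_integrable hμ q c).const_mul _)]
  rw [dotProduct]
  refine Finset.sum_congr rfl fun q _ => ?_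
  rw [integral_const_mul, mulVec_eq_integral hμ c q]

/-- The complement of the support is null. -/
lemma compl_msupport_null (μ : Measure (ℝ × ℝ)) : μ (msupport μ)ᶜ = 0 := by
  refine measure_null_of_locally_null _ fun z hz => ?_
  simp only [msupport, Set.mem_compl_iff, Set.mem_setOf_eq, not_forall] at hz
  obtain ⟨U, hU, hzU, hμU⟩ := hz
  push_neg at hμU
  exact ⟨U, nhdsWithin_le_nhds (hU.mem_nhds hzU), hμU⟩

lemma fV_ae_zero_of_vanish (hv : ∀ z ∈ msupport μ, fV n c z = 0) :
    (fun z => fV n c z) =ᵐ[μ] 0 := by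
  refine Filter.eventuallyEq_of_mem (s := msupport μ) ?_ hv
  rw [mem_ae_iff]
  exact compl_msupport_null μ

lemma zero_on_msupport_of_ae_zero {f : ℝ × ℝ → ℝ} (hf : Continuous f)
    (h : f =ᵐ[μ] 0) {z : ℝ × ℝ} (hz : z ∈ msupport μ) : f z = 0 := by
  by_contra hne
  have hopen : IsOpen {w : ℝ × ℝ | f w ≠ 0} := isOpen_ne_fun hf continuous_const
  have := hz _ hopen hne
  rw [Filter.EventuallyEq, ae_iff] at h
  exact this (by simpa using h)

end Aux

/-- `supp μ ⊆ V(M(n))` and `rank M(n) ≤ card supp μ ≤ card V(M(n))`. -/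
theorem msupport_subset_variety_and_rank_le (n : ℕ) (β : ℕ → ℕ → ℝ) (μ : Measure (ℝ × ℝ))
    (hμ : Represents n β μ) :
    msupport μ ⊆ variety n β ∧
    ((momentMatrix n β).rank : ℕ∞) ≤ (msupport μ).encard ∧
    (msupport μ).encard ≤ (variety n β).encard := by
  have hsub : msupport μ ⊆ variety n β := by
    intro z hz p hdeg hker
    set c := coeffVec n p with hc
    have hzero : ∫ w : ℝ × ℝ, fV n c w * fV n c w ∂μ = 0 := by
      rw [← dot_eq_integral_sq hμ c, hker, dotProduct_zero]
    have hae : (fun w : ℝ × ℝ => fV n c w * fV n c w) =ᵐ[μ] 0 :=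
      (integral_eq_zero_iff_of_nonneg (fun w => mul_self_nonneg _)
        (fV_sq_integrable hμ c)).mp hzero
    have hae' : (fun w : ℝ × ℝ => fV n c w) =ᵐ[μ] 0 := by
      filter_upwards [hae] with w hw
      exact mul_self_eq_zero.1 hw
    rw [eval_eq_fV p hdeg]
    exact zero_on_msupport_of_ae_zero (fV_continuous n c) hae' hz
  refine ⟨hsub, ?_, Set.encard_mono hsub⟩
  by_cases hfin : (msupport μ).Finite
  · haveI : Fintype ↥(msupport μ) := hfin.fintype
    set E : Matrix ↥(msupport μ) (Idx n) ℝ :=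
      fun z q => z.1.1 ^ (q.1.1 : ℕ) * z.1.2 ^ (q.1.2 : ℕ) with hE
    have hker : LinearMap.ker E.mulVecLin ≤ LinearMap.ker (momentMatrix n β).mulVecLin := by
      intro c hc
      rw [LinearMap.mem_ker, Matrix.mulVecLin_apply] at hc ⊢
      have hv : ∀ w ∈ msupport μ, fV n c w = 0 := by
        intro w hw
        have h0 := congrFun hc ⟨w, hw⟩
        rw [Pi.zero_apply, Matrix.mulVec, dotProduct] at h0
        rw [fV, ← h0]
        exact Finset.sum_congr rfl fun q _ => (mul_comm _ _)
      have haev := fV_ae_zero_of_vanish hv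
      funext q
      have hmz : (fun w : ℝ × ℝ =>
          (w.1 ^ (q.1.1 : ℕ) * w.2 ^ (q.1.2 : ℕ)) * fV n c w) =ᵐ[μ] 0 := by
        filter_upwards [haev] with w hw
        simp only [Pi.zero_apply] at hw ⊢
        rw [hw, mul_zero]
      rw [Pi.zero_apply, mulVec_eq_integral hμ c q, integral_eq_zero_of_ae hmz]
    have h1 := LinearMap.finrank_range_add_finrank_ker (momentMatrix n β).mulVecLin
    have h2 := LinearMap.finrank_range_add_finrank_ker E.mulVecLin
    have hk := Submodule.finrank_mono hker
    have hrank : (momentMatrix n β).rank ≤ E.rank := by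
      rw [Matrix.rank, Matrix.rank]
      omega
    calc ((momentMatrix n β).rank : ℕ∞) ≤ (E.rank : ℕ∞) := by exact_mod_cast hrank
      _ ≤ (Fintype.card ↥(msupport μ) : ℕ∞) := by exact_mod_cast Matrix.rank_le_card_height E
      _ = (msupport μ).encard := by
          rw [Set.encard_eq_coe_toFinset_card, Set.toFinset_card]
  · rw [Set.Infinite.encard_eq hfin]
    exact le_top
end

section
/- If a moment sequence β^{(2n)} is consistent, then it is weakly consistent: if Λ_β(x^i y^j · p) = 0 for all polynomials p of degree ≤ 2n vanishing on V(M(n)) (in particular Λ_β(qp) = 0 for all q with deg(qp) ≤ 2n), then every polynomial p of degree ≤ n vanishing on V(M(n)) has coefficient vector in ker M(n). -/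
open MeasureTheory MvPolynomial

lemma fin2_sum_eq (d : Fin 2 →₀ ℕ) : (d.sum fun _ e => e) = d 0 + d 1 := by
  rw [Finsupp.sum_fintype _ _ (fun _ => rfl), Fin.sum_univ_two]

lemma fin2_decomp (d : Fin 2 →₀ ℕ) :
    d = Finsupp.single 0 (d 0) + Finsupp.single 1 (d 1) := by
  ext a
  fin_cases a <;> simp [Finsupp.single_apply]

/-- consistency implies weak consistency. -/
theorem weakly_consistent_of_consistent (n : ℕ) (β : ℕ → ℕ → ℝ)
    (hcons : ∀ p : MvPolynomial (Fin 2) ℝ, p.totalDegree ≤ 2 * n →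
      (∀ z ∈ variety n β, eval ![z.1, z.2] p = 0) → riesz β p = 0) :
    ∀ p : MvPolynomial (Fin 2) ℝ, p.totalDegree ≤ n →
      (∀ z ∈ variety n β, eval ![z.1, z.2] p = 0) →
      (momentMatrix n β).mulVec (coeffVec n p) = 0 := by
  intro p hdeg hvan
  funext idx
  obtain ⟨⟨⟨i, hi⟩, ⟨j, hj⟩⟩, hij⟩ := idx
  have hijn : i + j ≤ n := hij
  simp only [Pi.zero_apply]
  set m : Fin 2 →₀ ℕ := Finsupp.single 0 i + Finsupp.single 1 j with hm
  have hm0 : m 0 = i := by simp [hm, Finsupp.single_apply]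
  have hm1 : m 1 = j := by simp [hm, Finsupp.single_apply]
  set P : MvPolynomial (Fin 2) ℝ := monomial m 1 * p with hP
  have hmsum : (m.sum fun _ e => e) = i + j := by rw [fin2_sum_eq, hm0, hm1]
  have hPdeg : P.totalDegree ≤ 2 * n := by
    calc P.totalDegree ≤ (monomial m (1:ℝ)).totalDegree + p.totalDegree :=
          totalDegree_mul _ _
      _ ≤ n + n := by
          apply add_le_add _ hdeg
          rw [totalDegree_monomial m (one_ne_zero), hmsum]
          exact hijn
      _ = 2 * n := by ring
  have hPvan : ∀ z ∈ variety n β, eval ![z.1, z.2] P = 0 := by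
    intro z hz
    rw [hP, eval_mul, hvan z hz, mul_zero]
  have key : riesz β P = 0 := hcons P hPdeg hPvan
  -- rewrite riesz β P as a sum over p.support
  have hsub : P.support ⊆ p.support.image (fun d => m + d) := by
    intro d hd
    rw [mem_support_iff] at hd
    rw [coeff_monomial_mul'] at hd
    by_cases hle : m ≤ d
    · simp only [hle, if_true, one_mul] at hd
      refine Finset.mem_image.mpr ⟨d - m, mem_support_iff.mpr hd, ?_⟩
      exact add_tsub_cancel_of_le hle
    · simp [hle] at hd
  have step1 : riesz β P = ∑ d ∈ p.support, p.coeff d * β (i + d 0) (j + d 1) := by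
    rw [riesz]
    rw [Finset.sum_subset hsub (by
      intro d _ hd
      rw [mem_support_iff, not_not] at hd
      rw [hd, zero_mul])]
    rw [Finset.sum_image (by
      intro a _ b _ h
      exact add_left_cancel h)]
    apply Finset.sum_congr rfl
    intro d _
    rw [hP, coeff_monomial_mul, one_mul]
    simp [hm0, hm1]
  -- reindex the mulVec sum
  have step2 : (momentMatrix n β).mulVec (coeffVec n p) ⟨(⟨i, hi⟩, ⟨j, hj⟩), hij⟩
      = ∑ d ∈ p.support, p.coeff d * β (i + d 0) (j + d 1) := by
    set g : (Fin 2 →₀ ℕ) → ℝ := fun d => p.coeff d * β (i + d 0) (j + d 1) with hg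
    set e : Idx n → (Fin 2 →₀ ℕ) :=
      fun r => Finsupp.single 0 (r.1.1 : ℕ) + Finsupp.single 1 (r.1.2 : ℕ) with he
    have hinj : ∀ a ∈ (Finset.univ : Finset (Idx n)), ∀ b ∈ (Finset.univ : Finset (Idx n)),
        e a = e b → a = b := by
      rintro ⟨⟨a1, a2⟩, ha⟩ - ⟨⟨b1, b2⟩, hb⟩ - h
      have h0 := DFunLike.congr_fun h 0
      have h1 := DFunLike.congr_fun h 1
      simp [he, Finsupp.single_apply] at h0 h1
      apply Subtype.ext
      simp only []
      rw [Prod.mk.injEq]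
      exact ⟨Fin.ext h0, Fin.ext h1⟩
    have hval : (momentMatrix n β).mulVec (coeffVec n p) ⟨(⟨i, hi⟩, ⟨j, hj⟩), hij⟩
        = ∑ r : Idx n, g (e r) := by
      rw [Matrix.mulVec]
      apply Finset.sum_congr rfl
      intro r _
      simp only [momentMatrix, coeffVec, hg, he]
      rw [mul_comm]
      congr 2 <;> simp [Finsupp.single_apply]
    rw [hval, ← Finset.sum_image hinj]
    refine (Finset.sum_subset ?_ ?_).symm
    · intro d hd
      have hdn : d 0 + d 1 ≤ n := by
        have := le_totalDegree hd
        rw [fin2_sum_eq] at this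
        omega
      refine Finset.mem_image.mpr ⟨⟨(⟨d 0, by omega⟩, ⟨d 1, by omega⟩), hdn⟩,
        Finset.mem_univ _, ?_⟩
      exact (fin2_decomp d).symm
    · intro d _ hd
      rw [mem_support_iff, not_not] at hd
      rw [hg]
      simp only []
      rw [hd, zero_mul]
  rw [step2, ← step1, key]
end
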